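/- arXiv:1307.5808 — 7 statements merged into one kernel-verified Lean document; each statement's English description precedes it below -/
import Mathlib

section
/- In any tree T on n vertices with bipartition classes A and B, the smaller bipartition class S (so |S| ≤ n/2) is a global offensive alliance: S is a dominating set, and every vertex v outside S satisfies |N[v] ∩ S| ≥ |N[v] \ S|, where N[v] denotes the closed neighborhood of v. -/
open SimpleGraph Finset
open scoped Classical

/-- The closed neighborhood `N[v]` of a vertex `v`. -/
noncomputable def closedNbhd {V : Type*} [Fintype V] (G : SimpleGraph V) (v : V) : Finset V :=
  insert v (Finset.univ.filter (fun u => G.Adj v u))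

/-- `S` is a dominating set: every vertex outside `S` has a neighbor in `S`. -/
def Dominating {V : Type*} [Fintype V] (G : SimpleGraph V) (S : Finset V) : Prop :=
  ∀ v, v ∉ S → ∃ u ∈ S, G.Adj v u

/-- `S` is a global defensive alliance. -/
def GlobalDefensiveAlliance {V : Type*} [Fintype V] (G : SimpleGraph V) (S : Finset V) : Prop :=
  Dominating G S ∧ ∀ v ∈ S, (closedNbhd G v \ S).card ≤ (closedNbhd G v ∩ S).card

/-- `S` is a global offensive alliance. -/
def GlobalOffensiveAlliance {V : Type*} [Fintype V] (G : SimpleGraph V) (S : Finset V) : Prop :=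
  Dominating G S ∧ ∀ v, v ∉ S → (∃ u ∈ S, G.Adj v u) →
    (closedNbhd G v \ S).card ≤ (closedNbhd G v ∩ S).card

/-- Edges with both endpoints in `S`. -/
noncomputable def edgesInside {V : Type*} [Fintype V] (G : SimpleGraph V) (S : Finset V) :
    Finset (Sym2 V) :=
  G.edgeFinset.filter (fun e => ∀ x ∈ e, x ∈ S)

/-- Edges with both endpoints outside `S`. -/
noncomputable def edgesOutside {V : Type*} [Fintype V] (G : SimpleGraph V) (S : Finset V) :
    Finset (Sym2 V) :=
  G.edgeFinset.filter (fun e => ∀ x ∈ e, x ∉ S)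

/-- Edges with exactly one endpoint in `S`. -/
noncomputable def edgesBetween {V : Type*} [Fintype V] (G : SimpleGraph V) (S : Finset V) :
    Finset (Sym2 V) :=
  G.edgeFinset.filter (fun e => (∃ x ∈ e, x ∈ S) ∧ (∃ x ∈ e, x ∉ S))

/-- The global defensive alliance number `γ_a(G)`. -/
noncomputable def gammaA {V : Type*} [Fintype V] (G : SimpleGraph V) : ℕ :=
  sInf {k | ∃ S : Finset V, GlobalDefensiveAlliance G S ∧ S.card = k}

/-- The global offensive alliance number `γ_o(G)`. -/
noncomputable def gammaO {V : Type*} [Fintype V] (G : SimpleGraph V) : ℕ :=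
  sInf {k | ∃ S : Finset V, GlobalOffensiveAlliance G S ∧ S.card = k}

/-- In a tree on at least 2 vertices with bipartition classes A and B, the smaller class A
satisfies |A| ≤ n/2, is dominating, and every vertex outside A satisfies the offensive
alliance condition; in particular A is a global offensive alliance. -/
theorem stmt_0 {V : Type*} [Fintype V] (G : SimpleGraph V) (hT : G.IsTree)
    (hn : 2 ≤ Fintype.card V)
    (A B : Finset V) (hUnion : A ∪ B = Finset.univ) (hDisj : Disjoint A B)
    (hBip : ∀ u v : V, G.Adj u v → (u ∈ A ↔ v ∈ B))
    (hSmall : A.card ≤ B.card) :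
    2 * A.card ≤ Fintype.card V ∧
    Dominating G A ∧
    (∀ v, v ∉ A → (closedNbhd G v \ A).card ≤ (closedNbhd G v ∩ A).card) ∧
    GlobalOffensiveAlliance G A := by
  have hcard : A.card + B.card = Fintype.card V := by
    rw [← Finset.card_union_of_disjoint hDisj, hUnion, Finset.card_univ]
  have h1 : 2 * A.card ≤ Fintype.card V := by omega
  have hnbr : ∀ v : V, ∃ u, G.Adj v u := by
    intro v
    obtain ⟨w, hw⟩ := Fintype.exists_ne_of_one_lt_card hn v
    obtain ⟨p⟩ := hT.isConnected.preconnected v w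
    cases p with
    | nil => exact absurd rfl hw.symm
    | cons h q => exact ⟨_, h⟩
  have hNbrA : ∀ v u, v ∉ A → G.Adj v u → u ∈ A := by
    intro v u hv hadj
    have hub : u ∉ B := fun hb => hv ((hBip v u hadj).mpr hb)
    have : u ∈ A ∪ B := hUnion ▸ Finset.mem_univ u
    rcases Finset.mem_union.mp this with h | h
    · exact h
    · exact absurd h hub
  have hdom : Dominating G A := by
    intro v hv
    obtain ⟨u, hu⟩ := hnbr v
    exact ⟨u, hNbrA v u hv hu, hu⟩
  have hoff : ∀ v, v ∉ A → (closedNbhd G v \ A).card ≤ (closedNbhd G v ∩ A).card := by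
    intro v hv
    have hdiff : closedNbhd G v \ A = {v} := by
      ext x
      simp only [closedNbhd, Finset.mem_sdiff, Finset.mem_insert, Finset.mem_filter,
        Finset.mem_univ, true_and, Finset.mem_singleton]
      constructor
      · rintro ⟨h1 | h1, h2⟩
        · exact h1
        · exact absurd (hNbrA v x hv h1) h2
      · rintro rfl; exact ⟨Or.inl rfl, hv⟩
    obtain ⟨u, hu⟩ := hnbr v
    have hmem : u ∈ closedNbhd G v ∩ A := by
      simp only [closedNbhd, Finset.mem_inter, Finset.mem_insert, Finset.mem_filter,
        Finset.mem_univ, true_and]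
      exact ⟨Or.inr hu, hNbrA v u hv hu⟩
    rw [hdiff, Finset.card_singleton]
    exact Finset.one_le_card.mpr ⟨u, hmem⟩
  exact ⟨h1, hdom, hoff, hdom, fun v hv _ => hoff v hv⟩
end

section
/- For any tree T on n vertices, the global offensive alliance number satisfies γ_o(T) ≤ n/2, i.e., there exists a global offensive alliance of cardinality at most ⌊n/2⌋ (for n ≥ 2). -/
open SimpleGraph Finset
open scoped Classical

/-!
A tree is bipartite, and both colour classes of a bipartite graph are vertex covers, so the
smaller one has at most `n / 2` vertices. When no vertex is isolated, every vertex cover `S` is a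
global offensive alliance: a vertex outside `S` has all its neighbours in `S`, so the only vertex
of its closed neighbourhood outside `S` is itself.
-/

namespace SimpleGraph

variable {V : Type*} [Fintype V] {G : SimpleGraph V}

lemma closedNbhd_sdiff_subset_singleton_of_isVertexCover {S : Finset V}
    (hS : G.IsVertexCover S) {v : V} (hv : v ∉ S) : closedNbhd G v \ S ⊆ {v} := by
  intro x hx
  simp only [closedNbhd, mem_sdiff, mem_insert, mem_filter, mem_univ, true_and] at hx
  obtain ⟨rfl | hvx, hxS⟩ := hx
  · exact mem_singleton_self x
  · exact absurd ((hS hvx).resolve_left hv) hxS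

lemma IsVertexCover.globalOffensiveAlliance {S : Finset V} (hS : G.IsVertexCover S)
    (hadj : ∀ v, ∃ u, G.Adj v u) : GlobalOffensiveAlliance G S := by
  refine ⟨fun v hv => ?_, fun v hv ⟨u, huS, hvu⟩ => ?_⟩
  · obtain ⟨u, hvu⟩ := hadj v
    exact ⟨u, (hS hvu).resolve_left hv, hvu⟩
  · have hu : u ∈ closedNbhd G v ∩ S := by simp [closedNbhd, hvu, huS]
    calc (closedNbhd G v \ S).card
        ≤ ({v} : Finset V).card :=
          card_le_card (closedNbhd_sdiff_subset_singleton_of_isVertexCover hS hv)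
      _ = 1 := card_singleton v
      _ ≤ (closedNbhd G v ∩ S).card := card_pos.mpr ⟨u, hu⟩

lemma IsBipartite.exists_isVertexCover_card_le_half (hG : G.IsBipartite) :
    ∃ S : Finset V, G.IsVertexCover S ∧ S.card ≤ Fintype.card V / 2 := by
  obtain ⟨c⟩ := hG
  set S : Finset V := univ.filter (c · = 0)
  have hS : G.IsVertexCover S := fun v w h => by
    have := c.valid h
    simp only [S, coe_filter, mem_univ, true_and, Set.mem_ofPred_eq]
    omega
  have hSc : G.IsVertexCover ↑Sᶜ := fun v w h => by
    have := c.valid h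
    simp only [S, coe_compl, coe_filter, mem_univ, true_and, Set.mem_compl_iff,
      Set.mem_ofPred_eq]
    omega
  have hcard : S.card + Sᶜ.card = Fintype.card V := card_add_card_compl S
  by_cases hsmall : S.card ≤ Fintype.card V / 2
  · exact ⟨S, hS, hsmall⟩
  · exact ⟨Sᶜ, hSc, by omega⟩

lemma gammaO_le_card {S : Finset V} (hS : GlobalOffensiveAlliance G S) : gammaO G ≤ S.card :=
  Nat.sInf_le ⟨S, hS, rfl⟩

end SimpleGraph

/-- For any tree on n ≥ 2 vertices, γ_o(T) ≤ ⌊n/2⌋, witnessed by a global offensive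
alliance of cardinality at most ⌊n/2⌋. -/
theorem stmt_1 {V : Type*} [Fintype V] (G : SimpleGraph V) (hT : G.IsTree)
    (hn : 2 ≤ Fintype.card V) :
    (∃ S : Finset V, GlobalOffensiveAlliance G S ∧ S.card ≤ Fintype.card V / 2) ∧
    gammaO G ≤ Fintype.card V / 2 := by
  have : Nontrivial V := Fintype.one_lt_card_iff_nontrivial.mp hn
  have hadj : ∀ v, ∃ u, G.Adj v u := hT.connected.preconnected.exists_adj_of_nontrivial
  obtain ⟨S, hS, hcard⟩ := hT.isBipartite.exists_isVertexCover_card_le_half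
  have hgoa := hS.globalOffensiveAlliance hadj
  exact ⟨⟨S, hgoa, hcard⟩, (gammaO_le_card hgoa).trans hcard⟩
end

section
/- Let T be a tree on n vertices and S a global defensive alliance in T with |S| = k. Then the number of edges of T with both endpoints in S is at least n/2 − k. -/
/-!
Every vertex outside `S` has a neighbour in `S`, so `n - k` is at most the number of edges
leaving `S`. The alliance condition lets each `v ∈ S` send at most one more edge out of `S` than
it has neighbours inside `S`; summing over `S`, the edges leaving `S` number at most
`2 |E(S)| + k`. Hence `n - k ≤ 2 |E(S)| + k`.
-/

open SimpleGraph Finset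
open scoped Classical

lemma SimpleGraph.card_interedges_eq_sum {α : Type*} (G : SimpleGraph α) (s t : Finset α) :
    #(G.interedges s t) = ∑ v ∈ s, #{u ∈ t | G.Adj v u} := by
  simp only [interedges_def, card_filter, sum_product]

section

variable {V : Type*} [Fintype V] {G : SimpleGraph V} {S : Finset V}

lemma closedNbhd_sdiff_of_mem {v : V} (hv : v ∈ S) :
    closedNbhd G v \ S = {u ∈ Sᶜ | G.Adj v u} := by
  ext u
  simp only [closedNbhd, mem_sdiff, mem_insert, mem_filter, mem_univ, true_and, mem_compl]
  constructor
  · rintro ⟨rfl | hadj, hu⟩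
    · exact absurd hv hu
    · exact ⟨hu, hadj⟩
  · rintro ⟨hu, hadj⟩
    exact ⟨Or.inr hadj, hu⟩

lemma closedNbhd_inter_of_mem {v : V} (hv : v ∈ S) :
    closedNbhd G v ∩ S = insert v {u ∈ S | G.Adj v u} := by
  ext u
  simp only [closedNbhd, mem_inter, mem_insert, mem_filter, mem_univ, true_and]
  constructor
  · rintro ⟨rfl | hadj, hu⟩
    · exact Or.inl rfl
    · exact Or.inr ⟨hu, hadj⟩
  · rintro (rfl | ⟨hu, hadj⟩)
    · exact ⟨Or.inl rfl, hv⟩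
    · exact ⟨Or.inr hadj, hu⟩

lemma Dominating.card_compl_le_card_interedges (h : Dominating G S) :
    #Sᶜ ≤ #(G.interedges S Sᶜ) := by
  refine card_le_card_of_surjOn Prod.snd fun v hv => ?_
  have hv : v ∉ S := by simpa using hv
  obtain ⟨u, hu, hadj⟩ := h v hv
  exact ⟨(u, v), by simpa [mk_mem_interedges_iff, hu, hv] using hadj.symm, rfl⟩

lemma GlobalDefensiveAlliance.card_interedges_compl_le (h : GlobalDefensiveAlliance G S) :
    #(G.interedges S Sᶜ) ≤ #(G.interedges S S) + #S := by
  have hvertex : ∀ v ∈ S, #{u ∈ Sᶜ | G.Adj v u} ≤ #{u ∈ S | G.Adj v u} + 1 := fun v hv =>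
    calc #{u ∈ Sᶜ | G.Adj v u} ≤ #(insert v {u ∈ S | G.Adj v u}) := by
          simpa only [closedNbhd_sdiff_of_mem hv, closedNbhd_inter_of_mem hv] using h.2 v hv
      _ ≤ #{u ∈ S | G.Adj v u} + 1 := card_insert_le _ _
  calc #(G.interedges S Sᶜ) = ∑ v ∈ S, #{u ∈ Sᶜ | G.Adj v u} := card_interedges_eq_sum G S Sᶜ
    _ ≤ ∑ v ∈ S, (#{u ∈ S | G.Adj v u} + 1) := sum_le_sum hvertex
    _ = #(G.interedges S S) + #S := by
      rw [sum_add_distrib, card_interedges_eq_sum, sum_const, smul_eq_mul, mul_one]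

lemma card_interedges_self_le_two_mul_card_edgesInside :
    #(G.interedges S S) ≤ 2 * #(edgesInside G S) := by
  refine card_le_mul_card_image_of_maps_to (f := fun p => s(p.1, p.2)) ?_ 2 ?_
  · rintro ⟨a, b⟩ hab
    obtain ⟨ha, hb, hadj⟩ := (mk_mem_interedges_iff G).1 hab
    simp only [edgesInside, mem_filter, mem_edgeFinset, mem_edgeSet, Sym2.mem_iff]
    exact ⟨hadj, by rintro x (rfl | rfl) <;> assumption⟩
  · intro e _
    induction e with
    | _ a b =>
      calc #{p ∈ G.interedges S S | s(p.1, p.2) = s(a, b)} ≤ #({(a, b), (b, a)} : Finset _) := by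
            refine card_le_card fun p hp => ?_
            simp only [mem_filter, Sym2.eq_iff] at hp
            rcases hp.2 with ⟨rfl, rfl⟩ | ⟨rfl, rfl⟩ <;> simp
        _ ≤ 2 := card_le_two

lemma GlobalDefensiveAlliance.card_le_two_mul_card_edgesInside_add
    (h : GlobalDefensiveAlliance G S) :
    Fintype.card V ≤ 2 * #(edgesInside G S) + 2 * #S := by
  have hdominating := h.1.card_compl_le_card_interedges
  have hdefensive := h.card_interedges_compl_le
  have hinside := card_interedges_self_le_two_mul_card_edgesInside (G := G) (S := S)
  have hsplit := card_add_card_compl S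
  omega

end

theorem stmt_4_general {V : Type*} [Fintype V] (G : SimpleGraph V)
    (S : Finset V) (hS : GlobalDefensiveAlliance G S) (k : ℕ) (hk : S.card = k) :
    (Fintype.card V : ℝ) / 2 - k ≤ ((edgesInside G S).card : ℝ) := by
  have key : (Fintype.card V : ℝ) ≤ 2 * #(edgesInside G S) + 2 * k := by
    exact_mod_cast hk ▸ hS.card_le_two_mul_card_edgesInside_add
  linarith

/-- For a global defensive alliance S of size k in a tree on n vertices,
the number of edges with both endpoints in S is at least n/2 - k. -/
theorem stmt_4 {V : Type*} [Fintype V] (G : SimpleGraph V) (hT : G.IsTree)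
    (S : Finset V) (hS : GlobalDefensiveAlliance G S) (k : ℕ) (hk : S.card = k) :
    (Fintype.card V : ℝ) / 2 - k ≤ ((edgesInside G S).card : ℝ) :=
  stmt_4_general G S hS k hk
end

section
/- Let T be a tree on n vertices and S a global defensive alliance in T with |S| = k. Let E_Y be the set of edges of T with both endpoints outside S. Then |E_Y| ≤ 2k − n/2 − 1. -/
open SimpleGraph Finset
open scoped Classical

/-!
Write `e_S`, `e_B`, `e_Y` for the numbers of edges inside `S`, between `S` and `Sᶜ`, and
outside `S`; in a tree `e_S + e_B + e_Y = n - 1`. Every vertex outside `S` has a neighbour in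
`S`, so `n - k ≤ e_B`. Every `v ∈ S` has at most one more neighbour outside `S` than inside, and
summing over `S` gives `e_B ≤ k + 2 e_S`. Eliminating `e_S` and `e_B` leaves
`2 e_Y ≤ 4k - n - 2`.
-/

namespace SimpleGraph

variable {V : Type*} (G : SimpleGraph V)

lemma card_interedges_eq_sum_s5 (s t : Finset V) :
    #(G.interedges s t) = ∑ v ∈ s, #{u ∈ t | G.Adj v u} := by
  rw [interedges_def, card_filter, sum_product]
  exact sum_congr rfl fun v _ => (card_filter _ _).symm

lemma card_interedges_comm (s t : Finset V) : #(G.interedges s t) = #(G.interedges t s) :=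
  have := G.symm
  Rel.card_interedges_comm s t

variable [Fintype V] (S : Finset V)

lemma card_edgesInside_add_card_edgesBetween_add_card_edgesOutside :
    #(edgesInside G S) + #(edgesBetween G S) + #(edgesOutside G S) = #G.edgeFinset := by
  simp only [edgesInside, edgesBetween, edgesOutside, card_filter, ← sum_add_distrib,
    card_eq_sum_ones G.edgeFinset]
  refine sum_congr rfl fun e _ => ?_
  induction e with
  | _ a b => by_cases ha : a ∈ S <;> by_cases hb : b ∈ S <;> simp [ha, hb]

lemma card_interedges_compl_eq_card_edgesBetween :
    #(G.interedges S Sᶜ) = #(edgesBetween G S) := by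
  refine card_bij (fun p _ => s(p.1, p.2)) ?_ ?_ ?_
  · rintro ⟨a, b⟩ h
    rw [mk_mem_interedges_iff, mem_compl] at h
    simp only [edgesBetween, mem_filter, mem_edgeFinset, mem_edgeSet]
    exact ⟨h.2.2, ⟨a, Sym2.mem_mk_left a b, h.1⟩, ⟨b, Sym2.mem_mk_right a b, h.2.1⟩⟩
  · rintro ⟨a, b⟩ h ⟨c, d⟩ h' heq
    rw [mk_mem_interedges_iff, mem_compl] at h h'
    rcases Sym2.eq_iff.1 heq with ⟨rfl, rfl⟩ | ⟨rfl, rfl⟩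
    · rfl
    · exact absurd h.1 h'.2.1
  · intro e he
    simp only [edgesBetween, mem_filter, mem_edgeFinset] at he
    obtain ⟨hadj, ⟨x, hxe, hxS⟩, ⟨y, hye, hyS⟩⟩ := he
    have hxy : e = s(x, y) := (Sym2.mem_and_mem_iff (ne_of_mem_of_not_mem hxS hyS)).1 ⟨hxe, hye⟩
    subst hxy
    exact ⟨(x, y), (G.mk_mem_interedges_iff).2 ⟨hxS, mem_compl.2 hyS, hadj⟩, rfl⟩

lemma card_interedges_self_eq_two_mul_card_edgesInside :
    #(G.interedges S S) = 2 * #(edgesInside G S) := by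
  rw [card_eq_sum_card_fiberwise (f := fun p : V × V => s(p.1, p.2)) (t := edgesInside G S),
    mul_comm, sum_const_nat]
  · intro e he
    induction e with | _ a b => ?_
    obtain ⟨hadj, haS, hbS⟩ : G.Adj a b ∧ a ∈ S ∧ b ∈ S := by
      simpa [edgesInside] using he
    have hfiber : {p ∈ G.interedges S S | s(p.1, p.2) = s(a, b)} = {(a, b), (b, a)} := by
      ext ⟨x, y⟩
      simp only [mem_filter, mk_mem_interedges_iff, Sym2.eq_iff, mem_insert, mem_singleton,
        Prod.mk.injEq]
      constructor
      · exact fun h => h.2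
      · rintro (⟨rfl, rfl⟩ | ⟨rfl, rfl⟩)
        · exact ⟨⟨haS, hbS, hadj⟩, Or.inl ⟨rfl, rfl⟩⟩
        · exact ⟨⟨hbS, haS, hadj.symm⟩, Or.inr ⟨rfl, rfl⟩⟩
    rw [hfiber, card_pair_eq_two_iff]
    exact fun h => hadj.ne (Prod.mk.inj h).1
  · rintro ⟨a, b⟩ h
    rw [mem_coe, mk_mem_interedges_iff] at h
    simpa [edgesInside, or_imp, forall_and, h.1, h.2.1] using h.2.2

end SimpleGraph

section Alliance

variable {V : Type*} [Fintype V] {G : SimpleGraph V} {S : Finset V}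

lemma Dominating.card_compl_le_card_edgesBetween (h : Dominating G S) :
    #Sᶜ ≤ #(edgesBetween G S) := by
  rw [← G.card_interedges_compl_eq_card_edgesBetween, G.card_interedges_comm,
    G.card_interedges_eq_sum_s5]
  have hneighbor : ∀ v ∈ Sᶜ, 1 ≤ #{u ∈ S | G.Adj v u} := fun v hv => by
    obtain ⟨u, hu, hadj⟩ := h v (mem_compl.1 hv)
    exact card_pos.2 ⟨u, mem_filter.2 ⟨hu, hadj⟩⟩
  simpa using card_nsmul_le_sum _ _ 1 hneighbor

lemma GlobalDefensiveAlliance.card_neighbors_compl_le (h : GlobalDefensiveAlliance G S) {v : V}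
    (hv : v ∈ S) : #{u ∈ Sᶜ | G.Adj v u} ≤ #{u ∈ S | G.Adj v u} + 1 := by
  have houtside : closedNbhd G v \ S = {u ∈ Sᶜ | G.Adj v u} := by
    ext u
    by_cases rfl : u = v <;> simp_all [closedNbhd, and_comm]
  have hinside : closedNbhd G v ∩ S = insert v {u ∈ S | G.Adj v u} := by
    ext u
    by_cases rfl : u = v <;> simp_all [closedNbhd, and_comm]
  calc #{u ∈ Sᶜ | G.Adj v u} ≤ #(insert v {u ∈ S | G.Adj v u}) := houtside ▸ hinside ▸ h.2 v hv
    _ ≤ #{u ∈ S | G.Adj v u} + 1 := card_insert_le _ _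

lemma GlobalDefensiveAlliance.card_edgesBetween_le (h : GlobalDefensiveAlliance G S) :
    #(edgesBetween G S) ≤ #S + 2 * #(edgesInside G S) := by
  rw [← G.card_interedges_compl_eq_card_edgesBetween,
    ← G.card_interedges_self_eq_two_mul_card_edgesInside, G.card_interedges_eq_sum_s5,
    G.card_interedges_eq_sum_s5, card_eq_sum_ones S, ← sum_add_distrib]
  exact sum_le_sum fun v hv => (h.card_neighbors_compl_le hv).trans_eq (add_comm _ _)

end Alliance

/-- For a global defensive alliance S of size k in a tree on n vertices,
the number of edges with both endpoints outside S is at most 2k - n/2 - 1. -/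
theorem stmt_5 {V : Type*} [Fintype V] (G : SimpleGraph V) (hT : G.IsTree)
    (S : Finset V) (hS : GlobalDefensiveAlliance G S) (k : ℕ) (hk : S.card = k) :
    ((edgesOutside G S).card : ℝ) ≤ 2 * k - (Fintype.card V : ℝ) / 2 - 1 := by
  have hedges := G.card_edgesInside_add_card_edgesBetween_add_card_edgesOutside S
  have htree := hT.card_edgeFinset
  have hcompl := S.card_add_card_compl
  have hdom := hS.1.card_compl_le_card_edgesBetween
  have halliance := hS.card_edgesBetween_le
  have hnat : 2 * #(edgesOutside G S) + Fintype.card V + 2 ≤ 4 * k := by omega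
  have hreal : (2 * #(edgesOutside G S) + Fintype.card V + 2 : ℝ) ≤ 4 * k := by
    exact_mod_cast hnat
  linarith
end

section
/- Let G be a graph, S a global defensive alliance in G, and E_Y the set of edges of G with both endpoints in V − S. Let S' be obtained from S by adding, for each edge in E_Y, one of its endpoints, so that no edge of G has both endpoints outside S'. Then S' is a global offensive alliance and |S'| ≤ |S| + |E_Y|. -/
open SimpleGraph Finset
open scoped Classical

/-- Adding to a global defensive alliance S one endpoint of each edge lying outside S
yields a global offensive alliance S' with |S'| ≤ |S| + |E_Y|. -/
theorem stmt_7 {V : Type*} [Fintype V] (G : SimpleGraph V)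
    (S : Finset V) (hS : GlobalDefensiveAlliance G S)
    (f : Sym2 V → V) (hf : ∀ e ∈ edgesOutside G S, f e ∈ e)
    (S' : Finset V) (hS' : S' = S ∪ (edgesOutside G S).image f) :
    (∀ e ∈ G.edgeFinset, ∃ x ∈ e, x ∈ S') ∧
    GlobalOffensiveAlliance G S' ∧
    S'.card ≤ S.card + (edgesOutside G S).card := by
  subst hS'
  have hSsub : S ⊆ S ∪ (edgesOutside G S).image f := Finset.subset_union_left
  have hcover : ∀ e ∈ G.edgeFinset, ∃ x ∈ e, x ∈ S ∪ (edgesOutside G S).image f := by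
    intro e he
    by_cases h : ∀ x ∈ e, x ∉ S
    · have heo : e ∈ edgesOutside G S := by
        rw [edgesOutside, Finset.mem_filter]
        exact ⟨he, h⟩
      exact ⟨f e, hf e heo, Finset.mem_union_right _ (Finset.mem_image_of_mem f heo)⟩
    · push_neg at h
      obtain ⟨x, hx, hxS⟩ := h
      exact ⟨x, hx, hSsub hxS⟩
  refine ⟨hcover, ⟨?_, ?_⟩, ?_⟩
  · intro v hv
    have hvS : v ∉ S := fun h => hv (hSsub h)
    obtain ⟨u, hu, hadj⟩ := hS.1 v hvS
    exact ⟨u, hSsub hu, hadj⟩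
  · intro v hv hadj
    obtain ⟨u, hu, huadj⟩ := hadj
    have hsub : closedNbhd G v \ (S ∪ (edgesOutside G S).image f) ⊆ {v} := by
      intro w hw
      rw [Finset.mem_sdiff] at hw
      obtain ⟨hw1, hw2⟩ := hw
      simp only [closedNbhd, Finset.mem_insert, Finset.mem_filter] at hw1
      rcases hw1 with h | h
      · simp [h]
      · exfalso
        have he : s(v, w) ∈ G.edgeFinset := by
          rw [SimpleGraph.mem_edgeFinset]; exact h.2
        obtain ⟨x, hx, hxS⟩ := hcover _ he
        rcases Sym2.mem_iff.mp hx with rfl | rfl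
        · exact hv hxS
        · exact hw2 hxS
    have h1 : (closedNbhd G v \ (S ∪ (edgesOutside G S).image f)).card ≤ 1 :=
      le_trans (Finset.card_le_card hsub) (by simp)
    have h2 : 1 ≤ (closedNbhd G v ∩ (S ∪ (edgesOutside G S).image f)).card := by
      rw [Finset.one_le_card]
      refine ⟨u, Finset.mem_inter.mpr ⟨?_, hu⟩⟩
      simp [closedNbhd, huadj]
    omega
  · calc (S ∪ (edgesOutside G S).image f).card
        ≤ S.card + ((edgesOutside G S).image f).card := Finset.card_union_le _ _
      _ ≤ S.card + (edgesOutside G S).card := by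
          exact Nat.add_le_add_left (Finset.card_image_le) _
end

section
/- If T is a tree on n vertices whose global defensive alliance number satisfies γ_a(T) ≤ n/3 + 1/2, then γ_o(T) ≤ 3γ_a(T) − n/2 − 1. -/
open SimpleGraph Finset
open scoped Classical

section MyAux
variable {V : Type*} [Fintype V] (G : SimpleGraph V) (S : Finset V)

/-- outside-neighbors of v -/
noncomputable def myNout (v : V) : Finset V := univ.filter (fun u => G.Adj v u ∧ u ∉ S)
/-- inside-neighbors of v -/
noncomputable def myNin (v : V) : Finset V := univ.filter (fun u => G.Adj v u ∧ u ∈ S)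

lemma gammaA_exists : ∃ S : Finset V, GlobalDefensiveAlliance G S ∧ S.card = gammaA G := by
  have hne : {k | ∃ S : Finset V, GlobalDefensiveAlliance G S ∧ S.card = k}.Nonempty :=
    ⟨(Finset.univ : Finset V).card, Finset.univ,
      ⟨fun v hv => absurd (mem_univ v) hv, fun v _ => by rw [Finset.sdiff_eq_empty_iff_subset.mpr (Finset.subset_univ _)]; simp⟩, rfl⟩
  exact Nat.sInf_mem hne

lemma edges_partition :
    (edgesInside G S).card + (edgesBetween G S).card + (edgesOutside G S).card
      = G.edgeFinset.card := by
  have d1 : Disjoint (edgesInside G S) (edgesBetween G S) := by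
    rw [Finset.disjoint_left]
    rintro e he1 he2
    rw [edgesInside, mem_filter] at he1
    rw [edgesBetween, mem_filter] at he2
    obtain ⟨x, hx, hxS⟩ := he2.2.2
    exact hxS (he1.2 x hx)
  have d2 : Disjoint (edgesInside G S ∪ edgesBetween G S) (edgesOutside G S) := by
    rw [Finset.disjoint_left]
    rintro e he1 he2
    rw [edgesOutside, mem_filter] at he2
    rcases Finset.mem_union.mp he1 with h | h
    · rw [edgesInside, mem_filter] at h
      exact he2.2 e.out.1 (Sym2.out_fst_mem e) (h.2 e.out.1 (Sym2.out_fst_mem e))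
    · rw [edgesBetween, mem_filter] at h
      obtain ⟨x, hx, hxS⟩ := h.2.1
      exact he2.2 x hx hxS
  have hun : edgesInside G S ∪ edgesBetween G S ∪ edgesOutside G S = G.edgeFinset := by
    apply Finset.Subset.antisymm
    · intro e he
      rcases Finset.mem_union.mp he with h | h
      · rcases Finset.mem_union.mp h with h | h
        · exact (mem_filter.mp h).1
        · exact (mem_filter.mp h).1
      · exact (mem_filter.mp h).1
    · intro e he
      induction e using Sym2.ind with
      | _ a b =>
        simp only [Finset.mem_union, edgesInside, edgesBetween, edgesOutside, mem_filter,
          Sym2.mem_iff, forall_eq_or_imp, forall_eq, exists_eq_or_imp, exists_eq_left]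
        by_cases ha : a ∈ S <;> by_cases hb : b ∈ S <;> tauto
    
  calc (edgesInside G S).card + (edgesBetween G S).card + (edgesOutside G S).card
      = (edgesInside G S ∪ edgesBetween G S).card + (edgesOutside G S).card := by
        rw [Finset.card_union_of_disjoint d1]
    _ = (edgesInside G S ∪ edgesBetween G S ∪ edgesOutside G S).card := by
        rw [Finset.card_union_of_disjoint d2]
    _ = G.edgeFinset.card := by rw [hun]

lemma ebtw_eq_sum :
    (edgesBetween G S).card = ∑ v ∈ S, (myNout G S v).card := by
  classical
  set P : Finset (V × V) := (S ×ˢ Sᶜ).filter (fun p => G.Adj p.1 p.2) with hP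
  have hmemP : ∀ p : V × V, p ∈ P ↔ (p.1 ∈ S ∧ p.2 ∉ S) ∧ G.Adj p.1 p.2 := by
    intro p
    rw [hP, Finset.mem_filter, Finset.mem_product, Finset.mem_compl]
  have h1 : P.card = ∑ v ∈ S, (myNout G S v).card := by
    rw [Finset.card_eq_sum_card_fiberwise (f := Prod.fst) (t := S)
      (fun p hp => ((hmemP p).mp hp).1.1)]
    refine Finset.sum_congr rfl (fun v hv => ?_)
    refine Finset.card_bij (fun p _ => p.2) ?_ ?_ ?_
    · rintro p hp
      rw [Finset.mem_filter] at hp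
      obtain ⟨hpP, hpv⟩ := hp
      rw [hmemP] at hpP
      rw [myNout, Finset.mem_filter]
      exact ⟨Finset.mem_univ _, hpv ▸ hpP.2, hpP.1.2⟩
    · rintro p hp q hq h
      rw [Finset.mem_filter] at hp hq
      exact Prod.ext (hp.2.trans hq.2.symm) h
    · rintro u hu
      rw [myNout, Finset.mem_filter] at hu
      refine ⟨(v, u), ?_, rfl⟩
      rw [Finset.mem_filter, hmemP]
      exact ⟨⟨⟨hv, hu.2.2⟩, hu.2.1⟩, rfl⟩
  have h2 : P.card = (edgesBetween G S).card := by
    refine Finset.card_bij (fun p _ => Sym2.mk p.1 p.2) ?_ ?_ ?_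
    · rintro ⟨a, b⟩ hp
      rw [hmemP] at hp
      simp only [edgesBetween, Finset.mem_filter, SimpleGraph.mem_edgeFinset,
        SimpleGraph.mem_edgeSet, Sym2.mem_iff]
      exact ⟨hp.2, ⟨a, Or.inl rfl, hp.1.1⟩, ⟨b, Or.inr rfl, hp.1.2⟩⟩
    · rintro ⟨a, b⟩ hp ⟨c, d⟩ hq h
      rw [hmemP] at hp hq
      rw [Sym2.eq_iff] at h
      rcases h with ⟨rfl, rfl⟩ | ⟨rfl, rfl⟩
      · rfl
      · exact absurd hq.1.1 hp.1.2
    · rintro e he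
      induction e using Sym2.ind with
      | _ a b =>
        simp only [edgesBetween, Finset.mem_filter, SimpleGraph.mem_edgeFinset,
          SimpleGraph.mem_edgeSet, Sym2.mem_iff] at he
        obtain ⟨hadj, ⟨x, hx, hxS⟩, ⟨y, hy, hyS⟩⟩ := he
        by_cases ha : a ∈ S
        · have hb : b ∉ S := by
            rcases hy with rfl | rfl
            exacts [absurd ha hyS, hyS]
          exact ⟨(a, b), (hmemP _).mpr ⟨⟨ha, hb⟩, hadj⟩, rfl⟩
        · have hb : b ∈ S := by
            rcases hx with rfl | rfl
            exacts [absurd hxS ha, hxS]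
          exact ⟨(b, a), (hmemP _).mpr ⟨⟨hb, ha⟩, hadj.symm⟩, Sym2.eq_swap⟩
  rw [← h2, h1]

/-- the subgraph induced on S, as a graph on V -/
def insideGraph : SimpleGraph V where
  Adj a b := G.Adj a b ∧ a ∈ S ∧ b ∈ S
  symm := ⟨fun a b ⟨h1, h2, h3⟩ => ⟨h1.symm, h3, h2⟩⟩
  loopless := ⟨fun a ⟨h1, _⟩ => G.loopless.irrefl a h1⟩

lemma two_ein : 2 * (edgesInside G S).card = ∑ v ∈ S, (myNin G S v).card := by
  classical
  have hE : edgesInside G S = (insideGraph G S).edgeFinset := by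
    ext e
    induction e using Sym2.ind with
    | _ a b =>
      simp only [edgesInside, Finset.mem_filter, SimpleGraph.mem_edgeFinset,
        SimpleGraph.mem_edgeSet, Sym2.mem_iff, forall_eq_or_imp, forall_eq]
      simp only [insideGraph]
  have hdeg : ∀ v, (insideGraph G S).degree v = if v ∈ S then (myNin G S v).card else 0 := by
    intro v
    rw [← SimpleGraph.card_neighborFinset_eq_degree]
    by_cases hv : v ∈ S
    · rw [if_pos hv]
      congr 1
      ext u
      simp only [SimpleGraph.mem_neighborFinset, myNin, Finset.mem_filter,
        Finset.mem_univ, true_and]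
      simp only [insideGraph]
      tauto
    · rw [if_neg hv]
      convert Finset.card_empty
      ext u
      simp only [SimpleGraph.mem_neighborFinset, Finset.notMem_empty, iff_false]
      simp only [insideGraph]
      tauto
  have := (insideGraph G S).sum_degrees_eq_twice_card_edges
  rw [hE, ← this]
  rw [← Finset.sum_subset (Finset.subset_univ S) (fun x _ hx => by rw [hdeg, if_neg hx])]
  exact Finset.sum_congr rfl (fun v hv => by rw [hdeg, if_pos hv])

lemma alliance_vertex (hA : GlobalDefensiveAlliance G S) :
    ∀ v ∈ S, (myNout G S v).card ≤ (myNin G S v).card + 1 := by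
  intro v hv
  have h1 : closedNbhd G v \ S = myNout G S v := by
    ext u
    simp only [closedNbhd, myNout, Finset.mem_sdiff, Finset.mem_insert, Finset.mem_filter,
      Finset.mem_univ, true_and]
    constructor
    · rintro ⟨h, hu⟩
      rcases h with rfl | h
      · exact absurd hv hu
      · exact ⟨h, hu⟩
    · rintro ⟨h, hu⟩
      exact ⟨Or.inr h, hu⟩
  have h2 : closedNbhd G v ∩ S = insert v (myNin G S v) := by
    ext u
    simp only [closedNbhd, myNin, Finset.mem_inter, Finset.mem_insert, Finset.mem_filter,
      Finset.mem_univ, true_and]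
    constructor
    · rintro ⟨h, hu⟩
      rcases h with rfl | h
      · exact Or.inl rfl
      · exact Or.inr ⟨h, hu⟩
    · rintro (rfl | ⟨h, hu⟩)
      · exact ⟨Or.inl rfl, hv⟩
      · exact ⟨Or.inr h, hu⟩
  have h3 : v ∉ myNin G S v := by
    simp [myNin]
  have := hA.2 v hv
  rw [h1, h2, Finset.card_insert_of_notMem h3] at this
  exact this

lemma dom_bound (hA : GlobalDefensiveAlliance G S) :
    Fintype.card V ≤ S.card + (edgesBetween G S).card := by
  classical
  have key : Sᶜ.card ≤ (edgesBetween G S).card := by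
    have hdom := hA.1
    set g : V → V := fun v => if hv : v ∉ S then (hdom v hv).choose else v with hg
    have hgspec : ∀ v, v ∉ S → g v ∈ S ∧ G.Adj v (g v) := by
      intro v hv
      rw [hg]
      simp only [dif_pos hv]
      obtain ⟨h1, h2⟩ := (hdom v hv).choose_spec
      exact ⟨h1, h2⟩
    apply Finset.card_le_card_of_injOn (fun v => s(v, g v))
    · intro v hv
      rw [Finset.coe_compl, Set.mem_compl_iff, Finset.mem_coe] at hv
      obtain ⟨h1, h2⟩ := hgspec v hv
      simp only [Finset.mem_coe, edgesBetween, Finset.mem_filter, SimpleGraph.mem_edgeFinset,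
        SimpleGraph.mem_edgeSet, Sym2.mem_iff]
      exact ⟨h2, ⟨g v, Or.inr rfl, h1⟩, ⟨v, Or.inl rfl, hv⟩⟩
    · intro v hv w hw h
      rw [Finset.coe_compl, Set.mem_compl_iff, Finset.mem_coe] at hv hw
      rw [Sym2.eq_iff] at h
      rcases h with ⟨rfl, -⟩ | ⟨h1, -⟩
      · rfl
      · exact absurd ((hgspec w hw).1) (h1 ▸ hv)
  rw [Finset.card_compl] at key
  have := Finset.card_le_univ S
  omega

lemma gammaO_le_of_dom (hdom : Dominating G S) :
    gammaO G ≤ S.card + (edgesOutside G S).card := by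
  classical
  set T := (edgesOutside G S).image (fun e => e.out.1) with hT
  have hcard : (S ∪ T).card ≤ S.card + (edgesOutside G S).card :=
    le_trans (Finset.card_union_le _ _)
      (Nat.add_le_add_left (Finset.card_image_le) _)
  have hGOA : GlobalOffensiveAlliance G (S ∪ T) := by
    constructor
    · intro v hv
      have hvS : v ∉ S := fun h => hv (Finset.mem_union_left _ h)
      obtain ⟨u, hu, hadj⟩ := hdom v hvS
      exact ⟨u, Finset.mem_union_left _ hu, hadj⟩
    · rintro v hv ⟨u, hu, hadj⟩
      have hsub : closedNbhd G v \ (S ∪ T) ⊆ {v} := by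
        intro x hx
        rw [Finset.mem_sdiff] at hx
        obtain ⟨hx1, hx2⟩ := hx
        simp only [closedNbhd, Finset.mem_insert, Finset.mem_filter, Finset.mem_univ,
          true_and] at hx1
        rcases hx1 with rfl | hvx
        · exact Finset.mem_singleton_self _
        · exfalso
          have hvS : v ∉ S := fun h => hv (Finset.mem_union_left _ h)
          have hxS : x ∉ S := fun h => hx2 (Finset.mem_union_left _ h)
          have he : s(v, x) ∈ edgesOutside G S := by
            simp only [edgesOutside, Finset.mem_filter, SimpleGraph.mem_edgeFinset,
              SimpleGraph.mem_edgeSet, Sym2.mem_iff]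
            constructor
            · exact hvx
            · rintro y (rfl | rfl)
              · exact hvS
              · exact hxS
          have hmem : (s(v, x)).out.1 ∈ T := Finset.mem_image_of_mem _ he
          have : (s(v, x)).out.1 ∈ s(v, x) := Sym2.out_fst_mem _
          rw [Sym2.mem_iff] at this
          rcases this with h | h
          · exact hv (Finset.mem_union_right _ (h ▸ hmem))
          · exact hx2 (Finset.mem_union_right _ (h ▸ hmem))
      calc (closedNbhd G v \ (S ∪ T)).card ≤ ({v} : Finset V).card := Finset.card_le_card hsub
        _ = 1 := Finset.card_singleton v
        _ ≤ (closedNbhd G v ∩ (S ∪ T)).card := by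
            apply Finset.card_pos.mpr
            refine ⟨u, Finset.mem_inter.mpr ⟨?_, hu⟩⟩
            simp only [closedNbhd, Finset.mem_insert, Finset.mem_filter, Finset.mem_univ,
              true_and]
            exact Or.inr hadj
  exact le_trans (Nat.sInf_le ⟨S ∪ T, hGOA, rfl⟩) hcard

end MyAux

/-- If γ_a(T) ≤ n/3 + 1/2 for a tree T on n vertices, then γ_o(T) ≤ 3γ_a(T) - n/2 - 1. -/
theorem stmt_10 {V : Type*} [Fintype V] (G : SimpleGraph V) (hT : G.IsTree)
    (h : (gammaA G : ℝ) ≤ (Fintype.card V : ℝ) / 3 + 1 / 2) :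
    (gammaO G : ℝ) ≤ 3 * (gammaA G : ℝ) - (Fintype.card V : ℝ) / 2 - 1 := by
  classical
  obtain ⟨S, hA, hScard⟩ := gammaA_exists G
  set n := Fintype.card V with hn
  have hn1 : 1 ≤ n := Fintype.card_pos_iff.mpr hT.isConnected.nonempty
  have htree : G.edgeFinset.card + 1 = n := hT.card_edgeFinset
  have hpart := edges_partition G S
  have hbtw : (edgesBetween G S).card ≤ 2 * (edgesInside G S).card + S.card := by
    rw [ebtw_eq_sum G S]
    calc ∑ v ∈ S, (myNout G S v).card ≤ ∑ v ∈ S, ((myNin G S v).card + 1) :=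
          Finset.sum_le_sum (alliance_vertex G S hA)
      _ = (∑ v ∈ S, (myNin G S v).card) + S.card := by rw [Finset.sum_add_distrib]; simp
      _ = 2 * (edgesInside G S).card + S.card := by rw [← two_ein G S]
  have hdomb := dom_bound G S hA
  have hO := gammaO_le_of_dom G S hA.1
  -- now pass to reals
  set a := S.card
  set ein := (edgesInside G S).card
  set ebtw := (edgesBetween G S).card
  set eout := (edgesOutside G S).card
  have hpart' : ein + ebtw + eout + 1 = n := by omega
  have hOr : (gammaO G : ℝ) ≤ (a : ℝ) + eout := by exact_mod_cast hO
  have hbtwr : (ebtw : ℝ) ≤ 2 * ein + a := by exact_mod_cast hbtw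
  have hdomr : (n : ℝ) ≤ a + ebtw := by exact_mod_cast hdomb
  have hpartr : (ein : ℝ) + ebtw + eout + 1 = n := by exact_mod_cast hpart'
  have ha : (a : ℝ) = gammaA G := by rw [hScard]
  rw [← ha]
  linarith
end

section
/- For any tree T on n vertices, |γ_o(T) − γ_a(T)| ≤ n/2, where γ_a(T) and γ_o(T) are the global defensive and global offensive alliance numbers. -/
/-!
Once `n ≥ 2` a tree is bipartite without isolated vertices, so each colour class is a global
offensive alliance and the smaller one gives `2 γ_o ≤ n` (and `γ_o ≤ 1` when `n = 1`).
Conversely, a minimum global offensive alliance `S` becomes defensive once every `v ∈ S` recruits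
half of its neighbours outside `S`: the vertices of `S` then win their own count, and the recruits
already won theirs against `S`. The recruits number at most half the edges leaving `S`, hence
`2 γ_a ≤ 2 γ_o + (n - 1)`. With `γ_a ≥ 1` both differences are at most `n / 2`.
-/

open SimpleGraph Finset
open scoped Classical

section

variable {V : Type*} [Fintype V] {G : SimpleGraph V} {S : Finset V} {u v : V}

lemma mem_closedNbhd : u ∈ closedNbhd G v ↔ u = v ∨ G.Adj v u := by
  simp [closedNbhd]

lemma self_mem_closedNbhd : v ∈ closedNbhd G v := mem_insert_self _ _

lemma Dominating.nonempty [Nonempty V] (h : Dominating G S) : S.Nonempty := by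
  by_contra hS
  rw [not_nonempty_iff_eq_empty] at hS
  subst hS
  obtain ⟨u, hu, -⟩ := h (Classical.arbitrary V) (notMem_empty _)
  exact notMem_empty u hu

lemma globalDefensiveAlliance_univ : GlobalDefensiveAlliance G univ :=
  ⟨fun v hv => absurd (mem_univ v) hv, fun v _ => by
    rw [inter_univ]; exact card_le_card sdiff_subset⟩

lemma globalOffensiveAlliance_univ : GlobalOffensiveAlliance G univ :=
  ⟨fun v hv => absurd (mem_univ v) hv, fun v hv => absurd (mem_univ v) hv⟩

lemma GlobalOffensiveAlliance.card_sdiff_le (hS : GlobalOffensiveAlliance G S) (hv : v ∉ S) :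
    (closedNbhd G v \ S).card ≤ (closedNbhd G v ∩ S).card :=
  hS.2 v hv (hS.1 v hv)

lemma one_le_gammaA [Nonempty V] : 1 ≤ gammaA G :=
  le_csInf ⟨_, univ, globalDefensiveAlliance_univ, rfl⟩ <| by
    rintro _ ⟨S, hS, rfl⟩
    exact hS.1.nonempty.card_pos

lemma gammaA_le_card (hS : GlobalDefensiveAlliance G S) : gammaA G ≤ S.card :=
  Nat.sInf_le ⟨S, hS, rfl⟩

lemma gammaO_le_card (hS : GlobalOffensiveAlliance G S) : gammaO G ≤ S.card :=
  Nat.sInf_le ⟨S, hS, rfl⟩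

lemma exists_globalOffensiveAlliance_card_eq_gammaO :
    ∃ S : Finset V, GlobalOffensiveAlliance G S ∧ S.card = gammaO G :=
  Nat.sInf_mem (s := {k | ∃ S : Finset V, GlobalOffensiveAlliance G S ∧ S.card = k})
    ⟨_, univ, globalOffensiveAlliance_univ, rfl⟩

lemma GlobalOffensiveAlliance.of_forall_adj_mem (hdom : Dominating G S)
    (hind : ∀ v ∉ S, ∀ u, G.Adj v u → u ∈ S) : GlobalOffensiveAlliance G S := by
  refine ⟨hdom, fun v hv ⟨u, huS, hvu⟩ => ?_⟩
  have houtside : closedNbhd G v \ S ⊆ {v} := fun x hx => by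
    obtain ⟨hx, hxS⟩ := mem_sdiff.1 hx
    rcases mem_closedNbhd.1 hx with rfl | hvx
    · exact mem_singleton_self x
    · exact absurd (hind v hv x hvx) hxS
  calc (closedNbhd G v \ S).card ≤ 1 := (card_le_card houtside).trans (card_singleton v).le
    _ ≤ (closedNbhd G v ∩ S).card :=
      card_pos.2 ⟨u, mem_inter.2 ⟨mem_closedNbhd.2 (Or.inr hvu), huS⟩⟩

lemma SimpleGraph.Colorable.two_mul_gammaO_le_card (hc : G.Colorable 2)
    (hG : ∀ v, ¬ G.IsIsolated v) : 2 * gammaO G ≤ Fintype.card V := by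
  obtain ⟨c⟩ := hc
  have hclass : ∀ i, GlobalOffensiveAlliance G (univ.filter (c · = i)) := by
    have hother : ∀ {i} {u v}, G.Adj v u → c v ≠ i → c u = i := fun {i u v} h hv => by
      have := c.valid h; omega
    intro i
    refine .of_forall_adj_mem (fun v hv => ?_) (fun v hv u hvu => ?_)
    · obtain ⟨u, hvu⟩ := not_forall_not.1 (hG v)
      exact ⟨u, by simpa using hother hvu (by simpa using hv), hvu⟩
    · simpa using hother hvu (by simpa using hv)
  have hsum : (univ.filter (c · = 0)).card + (univ.filter (c · = 1)).card = Fintype.card V := by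
    rw [← card_univ, ← card_filter_add_card_filter_not (s := univ) (c · = 0),
      filter_congr fun v _ => show c v = 1 ↔ ¬ c v = 0 by omega]
  have h0 := gammaO_le_card (hclass 0)
  have h1 := gammaO_le_card (hclass 1)
  omega

lemma SimpleGraph.IsTree.two_mul_gammaO_le_card_add_one (hT : G.IsTree) :
    2 * gammaO G ≤ Fintype.card V + 1 := by
  rcases le_or_gt (Fintype.card V) 1 with h | h
  · have := gammaO_le_card (G := G) globalOffensiveAlliance_univ
    rw [card_univ] at this
    omega
  · have : Nontrivial V := Fintype.one_lt_card_iff_nontrivial.1 h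
    have := hT.colorable_two.two_mul_gammaO_le_card hT.connected.preconnected.not_isIsolated
    omega

lemma adj_of_mem_closedNbhd_sdiff (hv : v ∈ S) (hu : u ∈ closedNbhd G v \ S) : G.Adj v u := by
  obtain ⟨hu, huS⟩ := mem_sdiff.1 hu
  exact (mem_closedNbhd.1 hu).resolve_left fun h => huS (h ▸ hv)

lemma GlobalOffensiveAlliance.exists_globalDefensiveAlliance (hS : GlobalOffensiveAlliance G S) :
    ∃ D : Finset V, GlobalDefensiveAlliance G D ∧
      2 * D.card ≤ 2 * S.card + ∑ v ∈ S, (closedNbhd G v \ S).card := by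
  choose X hXsub hXcard using fun v =>
    exists_subset_card_eq (Nat.div_le_self (closedNbhd G v \ S).card 2)
  set D := S ∪ S.biUnion X
  have hSD : S ⊆ D := subset_union_left
  refine ⟨D, ⟨fun v hv => ?_, fun v hv => ?_⟩, ?_⟩
  · obtain ⟨u, hu, hvu⟩ := hS.1 v fun h => hv (hSD h)
    exact ⟨u, hSD hu, hvu⟩
  · by_cases hvS : v ∈ S
    · have hXD : X v ⊆ D := (subset_biUnion_of_mem X hvS).trans subset_union_right
      have hvX : v ∉ X v := fun h => (mem_sdiff.1 (hXsub v h)).2 hvS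
      calc (closedNbhd G v \ D).card ≤ ((closedNbhd G v \ S) \ X v).card :=
            card_le_card fun x hx => by
              obtain ⟨hx, hxD⟩ := mem_sdiff.1 hx
              exact mem_sdiff.2 ⟨mem_sdiff.2 ⟨hx, fun h => hxD (hSD h)⟩, fun h => hxD (hXD h)⟩
        _ = (closedNbhd G v \ S).card - (closedNbhd G v \ S).card / 2 := by
            rw [card_sdiff_of_subset (hXsub v), hXcard]
        _ ≤ (closedNbhd G v \ S).card / 2 + 1 := by omega
        _ = (insert v (X v)).card := by rw [card_insert_of_notMem hvX, hXcard]
        _ ≤ (closedNbhd G v ∩ D).card :=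
            card_le_card <| insert_subset (mem_inter.2 ⟨self_mem_closedNbhd, hv⟩)
              (subset_inter ((hXsub v).trans sdiff_subset) hXD)
    · calc (closedNbhd G v \ D).card ≤ (closedNbhd G v \ S).card :=
            card_le_card (sdiff_subset_sdiff subset_rfl hSD)
        _ ≤ (closedNbhd G v ∩ S).card := hS.card_sdiff_le hvS
        _ ≤ (closedNbhd G v ∩ D).card := card_le_card (inter_subset_inter subset_rfl hSD)
  · calc 2 * D.card ≤ 2 * (S.card + ∑ v ∈ S, (X v).card) := by
          gcongr
          exact (card_union_le _ _).trans (by gcongr; exact card_biUnion_le)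
      _ ≤ 2 * S.card + ∑ v ∈ S, (closedNbhd G v \ S).card := by
          rw [mul_add, mul_sum]
          gcongr with v
          rw [hXcard]
          omega

lemma sum_card_closedNbhd_sdiff_le_card_edgeFinset (S : Finset V) :
    ∑ v ∈ S, (closedNbhd G v \ S).card ≤ #G.edgeFinset := by
  rw [← card_sigma]
  refine card_le_card_of_injOn (fun p => s(p.1, p.2)) (fun p hp => ?_) fun p hp q hq hpq => ?_
  · simp only [coe_sigma, Set.mem_sigma_iff, mem_coe] at hp
    simpa using adj_of_mem_closedNbhd_sdiff hp.1 hp.2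
  · simp only [coe_sigma, Set.mem_sigma_iff, mem_coe, mem_sdiff] at hp hq
    obtain ⟨a, b⟩ := p
    obtain ⟨c, d⟩ := q
    rcases Sym2.eq_iff.1 hpq with ⟨rfl, rfl⟩ | ⟨rfl, -⟩
    · rfl
    · exact absurd hp.1 hq.2.2

lemma two_mul_gammaA_le_two_mul_gammaO_add_card_edgeFinset (G : SimpleGraph V) :
    2 * gammaA G ≤ 2 * gammaO G + #G.edgeFinset := by
  obtain ⟨S, hS, hcard⟩ := exists_globalOffensiveAlliance_card_eq_gammaO (G := G)
  obtain ⟨D, hD, hDcard⟩ := hS.exists_globalDefensiveAlliance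
  have := gammaA_le_card hD
  have := sum_card_closedNbhd_sdiff_le_card_edgeFinset (G := G) S
  omega

end

/-- For any tree on n vertices, |γ_o(T) - γ_a(T)| ≤ n/2. -/
theorem stmt_14 {V : Type*} [Fintype V] (G : SimpleGraph V) (hT : G.IsTree) :
    |(gammaO G : ℝ) - (gammaA G : ℝ)| ≤ (Fintype.card V : ℝ) / 2 := by
  have := hT.connected.nonempty
  have hA : (1 : ℝ) ≤ gammaA G := by exact_mod_cast one_le_gammaA
  have hO : (2 * gammaO G : ℝ) ≤ Fintype.card V + 1 := by
    exact_mod_cast hT.two_mul_gammaO_le_card_add_one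
  have hAO : (2 * gammaA G : ℝ) ≤ 2 * gammaO G + Fintype.card V := by
    have := two_mul_gammaA_le_two_mul_gammaO_add_card_edgeFinset G
    have := hT.card_edgeFinset
    exact_mod_cast (by omega : 2 * gammaA G ≤ 2 * gammaO G + Fintype.card V)
  rw [abs_sub_le_iff]
  constructor <;> linarith
end
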